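/- Assume each g_i (1 ≤ i ≤ n) is row-stochastic and column-balanced, and that |A_{i+1}| ≤ 12 · |A_i| for every 0 ≤ i ≤ n-1. Let a and b be positive integers with a < n-1 and b < n, and fix l ∈ A_a and r ∈ A_b. Then ∑_{q ∈ A_n} ∑_{q' ∈ A_{n-1}} ∑_{L,R} W(q, q', L, R) ≤ 12^{2n-b-a-1}, where the innermost sum ranges over all pairs of sequences L = (L_0, …, L_{n-1}), R = (R_0, …, R_{n-1}) with L_i ∈ A_i, R_i ∈ A_{n-1-i}, L_a = l and R_{n-b-1} = r. -/

import Mathlib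

open Finset

lemma sum_pi_cons {m : ℕ} (B : Fin (m + 1) → Type) [∀ i, Fintype (B i)]
    (f : (∀ i, B i) → ℝ) :
    ∑ p : ∀ i, B i, f p = ∑ x : B 0, ∑ t : ∀ i : Fin m, B i.succ, f (Fin.cons x t) := by
  rw [← Equiv.sum_comp (Fin.consEquiv B) f, Fintype.sum_prod_type]
  rfl

lemma sum_pi_snoc {m : ℕ} (B : Fin (m + 1) → Type) [∀ i, Fintype (B i)]
    (f : (∀ i, B i) → ℝ) :
    ∑ p : ∀ i, B i, f p
      = ∑ t : ∀ i : Fin m, B i.castSucc, ∑ y : B (Fin.last m), f (Fin.snoc t y) := by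
  rw [← Equiv.sum_comp (Fin.snocEquiv B) f, Fintype.sum_prod_type, Finset.sum_comm]
  rfl

lemma rowChainL (m : ℕ) : ∀ (B : ℕ → Type) [∀ i, Fintype (B i)] [∀ i, DecidableEq (B i)]
    (k : ∀ i, B (i + 1) → B i → ℝ),
    (∀ i, i < m → ∀ x, ∑ y, k i x y = 1) → ∀ (l : B m),
    ∑ p : ∀ i : Fin (m + 1), B (i : ℕ),
      (if p (Fin.last m) = l then ∏ i : Fin m, k i (p i.succ) (p i.castSucc) else 0) = 1 := by
  induction m with
  | zero =>
    intro B _ _ k _ l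
    rw [sum_pi_cons (fun i : Fin 1 => B (i : ℕ))]
    simp [Fin.last, Finset.sum_ite_eq']
  | succ m ih =>
    intro B _ _ k hrow l
    rw [sum_pi_cons (fun i : Fin (m + 2) => B (i : ℕ)), Finset.sum_comm]
    have step : ∀ t : ∀ i : Fin (m + 1), B ((i.succ : Fin (m + 2)) : ℕ),
        ∑ x : B 0,
          (if Fin.cons (α := fun i : Fin (m + 2) => B (i : ℕ)) x t (Fin.last (m + 1)) = l then
            ∏ i : Fin (m + 1), k i
              (Fin.cons (α := fun i : Fin (m + 2) => B (i : ℕ)) x t i.succ)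
              (Fin.cons (α := fun i : Fin (m + 2) => B (i : ℕ)) x t i.castSucc) else 0)
        = (if t (Fin.last m) = l then
            ∏ i : Fin m, k ((i : ℕ) + 1) (t i.succ) (t i.castSucc) else 0) := by
      intro t
      have hcons : ∀ x : B 0,
          Fin.cons (α := fun i : Fin (m + 2) => B (i : ℕ)) x t (Fin.last (m + 1))
            = t (Fin.last m) :=
        fun x => Fin.cons_succ (α := fun i : Fin (m + 2) => B (i : ℕ)) x t (Fin.last m)
      have hprod : ∀ x : B 0,
          (∏ i : Fin (m + 1), k i
              (Fin.cons (α := fun i : Fin (m + 2) => B (i : ℕ)) x t i.succ)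
              (Fin.cons (α := fun i : Fin (m + 2) => B (i : ℕ)) x t i.castSucc))
            = k 0 (t 0) x * ∏ i : Fin m, k ((i : ℕ) + 1) (t i.succ) (t i.castSucc) := by
        intro x
        rw [Fin.prod_univ_succ]
        congr 1
      simp only [hcons, hprod]
      split_ifs with h
      · rw [← Finset.sum_mul, show (∑ y, k 0 (t 0) y) = 1 from hrow 0 (by omega) _, one_mul]
      · simp
    refine (Finset.sum_congr rfl fun t _ => step t).trans ?_
    exact ih (fun i => B (i + 1)) (fun i => k (i + 1)) (fun i hi x => hrow (i + 1) (by omega) x) l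

lemma rowChainR (C : ℕ → Type) [∀ i, Fintype (C i)] [∀ i, DecidableEq (C i)]
    (k : ∀ i, C i → C (i + 1) → ℝ) (r : C 0) :
    ∀ m, (∀ i, i < m → ∀ x, ∑ y, k i x y = 1) →
    ∑ p : ∀ i : Fin (m + 1), C (i : ℕ),
      (if p ⟨0, by omega⟩ = r then ∏ i : Fin m, k i (p i.castSucc) (p i.succ) else 0) = 1 := by
  intro m
  induction m with
  | zero =>
    intro _
    rw [sum_pi_cons (fun i : Fin 1 => C (i : ℕ))]
    simp [Finset.sum_ite_eq']
  | succ m ih =>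
    intro hrow
    rw [sum_pi_snoc (fun i : Fin (m + 2) => C (i : ℕ))]
    have step : ∀ t : ∀ i : Fin (m + 1), C ((i.castSucc : Fin (m + 2)) : ℕ),
        ∑ y : C ((Fin.last (m + 1) : Fin (m + 2)) : ℕ),
          (if Fin.snoc (α := fun i : Fin (m + 2) => C (i : ℕ)) t y ⟨0, by omega⟩ = r then
            ∏ i : Fin (m + 1), k i
              (Fin.snoc (α := fun i : Fin (m + 2) => C (i : ℕ)) t y i.castSucc)
              (Fin.snoc (α := fun i : Fin (m + 2) => C (i : ℕ)) t y i.succ) else 0)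
        = (if t ⟨0, by omega⟩ = r then ∏ i : Fin m, k i (t i.castSucc) (t i.succ) else 0) := by
      intro t
      have hsnoc0 : ∀ y, Fin.snoc (α := fun i : Fin (m + 2) => C (i : ℕ)) t y ⟨0, by omega⟩ = t ⟨0, by omega⟩ :=
        fun y => Fin.snoc_castSucc (α := fun i : Fin (m + 2) => C (i : ℕ)) y t 0
      have hprod : ∀ y,
          (∏ i : Fin (m + 1), k i
              (Fin.snoc (α := fun i : Fin (m + 2) => C (i : ℕ)) t y i.castSucc)
              (Fin.snoc (α := fun i : Fin (m + 2) => C (i : ℕ)) t y i.succ))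
            = (∏ i : Fin m, k i (t i.castSucc) (t i.succ)) * k m (t (Fin.last m)) y := by
        intro y
        rw [Fin.prod_univ_castSucc]
        congr 1
        · exact Finset.prod_congr rfl fun i _ => by
            have hs : Fin.snoc (α := fun i : Fin (m + 2) => C (i : ℕ)) t y i.castSucc.succ
                = t i.succ :=
              Fin.snoc_castSucc (α := fun i : Fin (m + 2) => C (i : ℕ)) y t i.succ
            rw [Fin.snoc_castSucc, hs]
            rfl
        · have h1 : Fin.snoc (α := fun i : Fin (m + 2) => C (i : ℕ)) t y
              (Fin.last m).castSucc = t (Fin.last m) :=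
            Fin.snoc_castSucc (α := fun i : Fin (m + 2) => C (i : ℕ)) y t (Fin.last m)
          have h2 : Fin.snoc (α := fun i : Fin (m + 2) => C (i : ℕ)) t y
              (Fin.last m).succ = y :=
            Fin.snoc_last (α := fun i : Fin (m + 2) => C (i : ℕ)) y t
          rw [h1, h2]
          rfl
      simp only [hsnoc0, hprod]
      split_ifs with h
      · have h3 : (∑ i : C ((Fin.last (m + 1) : Fin (m + 2)) : ℕ),
            k m (t (Fin.last m)) i) = 1 := hrow m (by omega) _
        rw [← Finset.mul_sum, h3, mul_one]
      · simp
    refine (Finset.sum_congr rfl fun t _ => step t).trans ?_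
    exact ih (fun i hi x => hrow i (by omega) x)

lemma chainL (B : ℕ → Type) [∀ i, Fintype (B i)] [∀ i, DecidableEq (B i)]
    (k : ∀ i, B (i + 1) → B i → ℝ) (c : ℕ → ℝ) (a : ℕ) (l : B a) :
    ∀ m, a ≤ m → (∀ i, i < m → ∀ x, ∑ y, k i x y = 1) →
    (∀ i, i < m → ∀ y, ∑ x, k i x y = c i) → ∀ (ham : a < m + 1),
    ∑ p : ∀ i : Fin (m + 1), B (i : ℕ),
      (if p ⟨a, ham⟩ = l then ∏ i : Fin m, k i (p i.succ) (p i.castSucc) else 0)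
      = ∏ i ∈ Finset.Ico a m, c i := by
  intro m
  induction m with
  | zero =>
    intro ha0 hrow hcol ham
    obtain rfl : a = 0 := by omega
    rw [Finset.Ico_self, Finset.prod_empty]
    exact rowChainL 0 B k (by omega) l
  | succ m ih =>
    intro ham' hrow hcol ham
    by_cases hma : a = m + 1
    · subst hma
      rw [Finset.Ico_self, Finset.prod_empty]
      exact rowChainL (m + 1) B k hrow l
    · have ham'' : a ≤ m := by omega
      have hamm : a < m + 1 := by omega
      rw [sum_pi_snoc (fun i : Fin (m + 2) => B (i : ℕ))]
      have step : ∀ t : ∀ i : Fin (m + 1), B ((i.castSucc : Fin (m + 2)) : ℕ),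
          (∑ y : B ((Fin.last (m + 1) : Fin (m + 2)) : ℕ),
            if Fin.snoc (α := fun i : Fin (m + 2) => B (i : ℕ)) t y ⟨a, ham⟩ = l then
              ∏ i : Fin (m + 1), k i
                (Fin.snoc (α := fun i : Fin (m + 2) => B (i : ℕ)) t y i.succ)
                (Fin.snoc (α := fun i : Fin (m + 2) => B (i : ℕ)) t y i.castSucc) else 0)
          = c m * (if t ⟨a, hamm⟩ = l then
              ∏ i : Fin m, k i (t i.succ) (t i.castSucc) else 0) := by
        intro t
        have hconstr : ∀ y,
            Fin.snoc (α := fun i : Fin (m + 2) => B (i : ℕ)) t y ⟨a, ham⟩ = t ⟨a, hamm⟩ :=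
          fun y => Fin.snoc_castSucc (α := fun i : Fin (m + 2) => B (i : ℕ)) y t ⟨a, hamm⟩
        have hprod : ∀ y,
            (∏ i : Fin (m + 1), k i
                (Fin.snoc (α := fun i : Fin (m + 2) => B (i : ℕ)) t y i.succ)
                (Fin.snoc (α := fun i : Fin (m + 2) => B (i : ℕ)) t y i.castSucc))
              = (∏ i : Fin m, k i (t i.succ) (t i.castSucc)) * k m y (t (Fin.last m)) := by
          intro y
          rw [Fin.prod_univ_castSucc]
          congr 1
          · refine Finset.prod_congr rfl fun i _ => ?_
            have hs : Fin.snoc (α := fun i : Fin (m + 2) => B (i : ℕ)) t y i.castSucc.succ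
                = t i.succ :=
              Fin.snoc_castSucc (α := fun i : Fin (m + 2) => B (i : ℕ)) y t i.succ
            rw [hs, Fin.snoc_castSucc]
            rfl
          · have h1 : Fin.snoc (α := fun i : Fin (m + 2) => B (i : ℕ)) t y
                (Fin.last m).castSucc = t (Fin.last m) :=
              Fin.snoc_castSucc (α := fun i : Fin (m + 2) => B (i : ℕ)) y t (Fin.last m)
            have h2 : Fin.snoc (α := fun i : Fin (m + 2) => B (i : ℕ)) t y
                (Fin.last m).succ = y :=
              Fin.snoc_last (α := fun i : Fin (m + 2) => B (i : ℕ)) y t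
            rw [h1, h2]
            rfl
        simp only [hconstr, hprod]
        split_ifs with h
        · have h3 : (∑ y : B ((Fin.last (m + 1) : Fin (m + 2)) : ℕ),
              k m y (t (Fin.last m))) = c m := hcol m (by omega) _
          rw [← Finset.mul_sum, h3]
          ring
        · simp
      refine (Finset.sum_congr rfl fun t _ => step t).trans ?_
      rw [← Finset.mul_sum]
      have hih : (∑ t : ∀ i : Fin (m + 1), B ((i.castSucc : Fin (m + 2)) : ℕ),
          if t ⟨a, hamm⟩ = l then ∏ i : Fin m, k i (t i.succ) (t i.castSucc) else 0)
          = ∏ i ∈ Finset.Ico a m, c i :=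
        ih ham'' (fun i hi => hrow i (by omega)) (fun i hi => hcol i (by omega)) hamm
      rw [hih, Finset.prod_Ico_succ_top ham'', mul_comm]

lemma chainRcore : ∀ (b m : ℕ), b ≤ m → ∀ (C : ℕ → Type) [∀ i, Fintype (C i)]
    [∀ i, DecidableEq (C i)] (k : ∀ i, C i → C (i + 1) → ℝ) (c : ℕ → ℝ),
    (∀ i, i < m → ∀ x, ∑ y, k i x y = 1) →
    (∀ i, i < m → ∀ y, ∑ x, k i x y = c i) → ∀ (r : C b) (hbm : b < m + 1),
    (∑ p : ∀ i : Fin (m + 1), C (i : ℕ),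
      if p ⟨b, hbm⟩ = r then ∏ i : Fin m, k i (p i.castSucc) (p i.succ) else 0)
      = ∏ i ∈ Finset.range b, c i := by
  intro b
  induction b with
  | zero =>
    intro m _ C _ _ k c hrow hcol r hbm
    rw [Finset.range_zero, Finset.prod_empty]
    exact rowChainR C k r m hrow
  | succ b ih =>
    intro m hbm' C _ _ k c hrow hcol r hbm
    obtain ⟨m', rfl⟩ : ∃ m', m = m' + 1 := ⟨m - 1, by omega⟩
    have hbm'' : b < m' + 1 := by omega
    rw [sum_pi_cons (fun i : Fin (m' + 2) => C (i : ℕ)), Finset.sum_comm]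
    have step : ∀ t : ∀ i : Fin (m' + 1), C ((i.succ : Fin (m' + 2)) : ℕ),
        (∑ x : C 0,
          if Fin.cons (α := fun i : Fin (m' + 2) => C (i : ℕ)) x t ⟨b + 1, hbm⟩ = r then
            ∏ i : Fin (m' + 1), k i
              (Fin.cons (α := fun i : Fin (m' + 2) => C (i : ℕ)) x t i.castSucc)
              (Fin.cons (α := fun i : Fin (m' + 2) => C (i : ℕ)) x t i.succ) else 0)
        = c 0 * (if t ⟨b, hbm''⟩ = r then
            ∏ i : Fin m', k ((i : ℕ) + 1) (t i.castSucc) (t i.succ) else 0) := by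
      intro t
      have hconstr : ∀ x : C 0,
          Fin.cons (α := fun i : Fin (m' + 2) => C (i : ℕ)) x t ⟨b + 1, hbm⟩
            = t ⟨b, hbm''⟩ :=
        fun x => Fin.cons_succ (α := fun i : Fin (m' + 2) => C (i : ℕ)) x t ⟨b, hbm''⟩
      have hprod : ∀ x : C 0,
          (∏ i : Fin (m' + 1), k i
              (Fin.cons (α := fun i : Fin (m' + 2) => C (i : ℕ)) x t i.castSucc)
              (Fin.cons (α := fun i : Fin (m' + 2) => C (i : ℕ)) x t i.succ))
            = k 0 x (t 0) * ∏ i : Fin m', k ((i : ℕ) + 1) (t i.castSucc) (t i.succ) := by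
        intro x
        rw [Fin.prod_univ_succ]
        congr 1
      simp only [hconstr, hprod]
      split_ifs with h
      · have h3 : (∑ x : C 0, k 0 x (t 0)) = c 0 := hcol 0 (by omega) _
        rw [← Finset.sum_mul, h3]
      · simp
    refine (Finset.sum_congr rfl fun t _ => step t).trans ?_
    rw [← Finset.mul_sum]
    have hih : (∑ t : ∀ i : Fin (m' + 1), C ((i.succ : Fin (m' + 2)) : ℕ),
        if t ⟨b, hbm''⟩ = r then ∏ i : Fin m', k ((i : ℕ) + 1) (t i.castSucc) (t i.succ) else 0)
        = ∏ i ∈ Finset.range b, c (i + 1) :=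
      ih m' (by omega) (fun i => C (i + 1)) (fun i => k (i + 1)) (fun i => c (i + 1))
        (fun i hi => hrow (i + 1) (by omega)) (fun i hi => hcol (i + 1) (by omega)) r hbm''
    rw [hih, Finset.prod_range_succ']
    ring

/-- The key estimate (Lemma of Section 6.1): with `A 0, …, A n` finite nonempty sets,
`g i : A i → A (i-1) → ℝ` nonnegative, row-stochastic and column-balanced for
`1 ≤ i ≤ n`, and `|A (i+1)| ≤ 12 |A i|` for `0 ≤ i ≤ n-1`, for positive `a < n-1`,
`b < n`, `l ∈ A a` and `r ∈ A b` we have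
`∑_{q ∈ A n} ∑_{q' ∈ A (n-1)} ∑_{L,R : L a = l, R (n-b-1) = r} W(q,q',L,R) ≤ 12^(2n-b-a-1)`,
where `W(q,q',L,R) = g n q (R 0) * 1[L (n-1) = q'] *
  ∏_{i=0}^{n-2} g (n-1-i) (R i) (R (i+1)) * g (i+1) (L (i+1)) (L i)`. -/
theorem key_estimate (n : ℕ) (hn : 1 ≤ n)
    (A : ℕ → Type) [∀ i, Fintype (A i)] [∀ i, Nonempty (A i)] [∀ i, DecidableEq (A i)]
    (g : ∀ i : ℕ, A i → A (i - 1) → ℝ)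
    (hnonneg : ∀ i, 1 ≤ i → i ≤ n → ∀ x y, 0 ≤ g i x y)
    (hrow : ∀ i, 1 ≤ i → i ≤ n → ∀ x, ∑ y, g i x y = 1)
    (hcol : ∀ i, 1 ≤ i → i ≤ n → ∀ y, ∑ x, g i x y =
      (Fintype.card (A i) : ℝ) / (Fintype.card (A (i - 1)) : ℝ))
    (hcard : ∀ i, i ≤ n - 1 → Fintype.card (A (i + 1)) ≤ 12 * Fintype.card (A i))
    (a b : ℕ) (ha0 : 0 < a) (ha : a < n - 1) (hb0 : 0 < b) (hb : b < n)
    (l : A a) (r : A b) :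
    ∑ q : A n, ∑ q' : A (n - 1),
      ∑ L ∈ Finset.univ.filter (fun L : ∀ i : Fin n, A i => L ⟨a, by omega⟩ = l),
        ∑ R ∈ Finset.univ.filter (fun R : ∀ i : Fin n, A (n - 1 - (i : ℕ)) =>
            R ⟨n - b - 1, by omega⟩ =
              cast (congrArg A (by omega : b = n - 1 - (n - b - 1))) r),
          (g n q (R ⟨0, by omega⟩) *
            (if L ⟨n - 1, by omega⟩ = q' then (1 : ℝ) else 0) *
            ∏ i : Fin (n - 1),
              g (n - 1 - (i : ℕ)) (R ⟨(i : ℕ), by have := i.isLt; omega⟩)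
                  (R ⟨(i : ℕ) + 1, by have := i.isLt; omega⟩) *
              g ((i : ℕ) + 1) (L ⟨(i : ℕ) + 1, by have := i.isLt; omega⟩)
                  (L ⟨(i : ℕ), by have := i.isLt; omega⟩))
      ≤ (12 : ℝ) ^ (2 * n - b - a - 1) := by
  obtain ⟨m, rfl⟩ : ∃ m, n = m + 1 := ⟨n - 1, by omega⟩
  have ham : a < m := by omega
  have hinner : ∀ (q : A (m + 1)) (q' : A (m + 1 - 1)),
      (∑ L ∈ Finset.univ.filter (fun L : ∀ i : Fin (m + 1), A i => L ⟨a, by omega⟩ = l),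
        ∑ R ∈ Finset.univ.filter (fun R : ∀ i : Fin (m + 1), A (m + 1 - 1 - (i : ℕ)) =>
            R ⟨m + 1 - b - 1, by omega⟩ =
              cast (congrArg A (by omega : b = m + 1 - 1 - (m + 1 - b - 1))) r),
          (g (m + 1) q (R ⟨0, by omega⟩) *
            (if L ⟨m + 1 - 1, by omega⟩ = q' then (1 : ℝ) else 0) *
            ∏ i : Fin (m + 1 - 1),
              g (m + 1 - 1 - (i : ℕ)) (R ⟨(i : ℕ), by have := i.isLt; omega⟩)
                  (R ⟨(i : ℕ) + 1, by have := i.isLt; omega⟩) *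
              g ((i : ℕ) + 1) (L ⟨(i : ℕ) + 1, by have := i.isLt; omega⟩)
                  (L ⟨(i : ℕ), by have := i.isLt; omega⟩)))
      = (∑ L : ∀ i : Fin (m + 1), A i,
          if L ⟨a, by omega⟩ = l then
            (if L ⟨m + 1 - 1, by omega⟩ = q' then (1 : ℝ) else 0) *
            ∏ i : Fin (m + 1 - 1),
              g ((i : ℕ) + 1) (L ⟨(i : ℕ) + 1, by have := i.isLt; omega⟩)
                  (L ⟨(i : ℕ), by have := i.isLt; omega⟩) else 0)
        * (∑ R : ∀ i : Fin (m + 1), A (m + 1 - 1 - (i : ℕ)),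
          if R ⟨m + 1 - b - 1, by omega⟩ =
              cast (congrArg A (by omega : b = m + 1 - 1 - (m + 1 - b - 1))) r then
            g (m + 1) q (R ⟨0, by omega⟩) *
            ∏ i : Fin (m + 1 - 1),
              g (m + 1 - 1 - (i : ℕ)) (R ⟨(i : ℕ), by have := i.isLt; omega⟩)
                  (R ⟨(i : ℕ) + 1, by have := i.isLt; omega⟩) else 0) := by
    intro q q'
    rw [Finset.sum_mul_sum, Finset.sum_filter]
    refine Finset.sum_congr rfl fun L _ => ?_
    by_cases hL : L ⟨a, by omega⟩ = l
    · rw [if_pos hL, Finset.sum_filter]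
      refine Finset.sum_congr rfl fun R _ => ?_
      by_cases hR : R ⟨m + 1 - b - 1, by omega⟩ =
          cast (congrArg A (by omega : b = m + 1 - 1 - (m + 1 - b - 1))) r
      · rw [if_pos hR, if_pos hL, if_pos hR, Finset.prod_mul_distrib]
        ring
      · rw [if_neg hR, if_neg hR, mul_zero]
    · rw [if_neg hL]
      simp [hL]
  refine le_trans (le_of_eq (Finset.sum_congr rfl fun q _ =>
    Finset.sum_congr rfl fun q' _ => hinner q q')) ?_
  have hsplit : ∀ {α β : Type} [Fintype α] [Fintype β] (f : α → ℝ) (h : β → ℝ),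
      ∑ q : β, ∑ q' : α, f q' * h q = (∑ q' : α, f q') * (∑ q : β, h q) := by
    intro α β _ _ f h
    refine (Finset.sum_congr rfl fun q _ => (Finset.sum_mul ..).symm).trans
      (Finset.mul_sum ..).symm
  rw [hsplit]
  -- auxiliary facts
  have hcardpos : ∀ i, 0 < (Fintype.card (A i) : ℝ) := fun i => by
    exact_mod_cast Fintype.card_pos
  have hratio : ∀ i, i ≤ m → (Fintype.card (A (i + 1)) : ℝ) / (Fintype.card (A i) : ℝ)
      ≤ 12 := by
    intro i hi
    rw [div_le_iff₀ (hcardpos i)]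
    exact_mod_cast hcard i (by omega)
  refine le_trans (mul_le_mul (b := (12 : ℝ) ^ (m - a)) (d := (12 : ℝ) ^ (m - b + 1))
    ?_ ?_ ?_ (by positivity)) (le_of_eq ?_)
  · -- L part
    rw [Finset.sum_comm]
    have hcollapse : ∀ L : ∀ i : Fin (m + 1), A (i : ℕ),
        (∑ q' : A (m + 1 - 1),
          if L ⟨a, by omega⟩ = l then
            (if L ⟨m + 1 - 1, by omega⟩ = q' then (1 : ℝ) else 0) *
            ∏ i : Fin (m + 1 - 1),
              g ((i : ℕ) + 1) (L ⟨(i : ℕ) + 1, by have := i.isLt; omega⟩)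
                (L ⟨(i : ℕ), by have := i.isLt; omega⟩) else 0)
        = (if L ⟨a, by omega⟩ = l then
            ∏ i : Fin (m + 1 - 1),
              g ((i : ℕ) + 1) (L ⟨(i : ℕ) + 1, by have := i.isLt; omega⟩)
                (L ⟨(i : ℕ), by have := i.isLt; omega⟩) else 0) := by
      intro L
      by_cases hL : L ⟨a, by omega⟩ = l
      · simp only [if_pos hL]
        rw [← Finset.sum_mul, Finset.sum_ite_eq]
        simp
      · simp [hL]
    refine le_trans (le_of_eq (Finset.sum_congr rfl fun L _ => hcollapse L)) ?_
    have hrowL : ∀ i, i < m → ∀ x : A (i + 1), ∑ y : A i, g (i + 1) x y = 1 :=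
      fun i hi x => hrow (i + 1) (by omega) (by omega) x
    have hcolL : ∀ i, i < m → ∀ y : A i, ∑ x : A (i + 1), g (i + 1) x y =
        (Fintype.card (A (i + 1)) : ℝ) / (Fintype.card (A i) : ℝ) :=
      fun i hi y => hcol (i + 1) (by omega) (by omega) y
    refine le_trans (le_of_eq (chainL A (fun i x y => g (i + 1) x y)
      (fun i => (Fintype.card (A (i + 1)) : ℝ) / (Fintype.card (A i) : ℝ)) a l m
      (by omega) hrowL hcolL (by omega))) ?_
    calc ∏ i ∈ Finset.Ico a m, (Fintype.card (A (i + 1)) : ℝ) / (Fintype.card (A i) : ℝ)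
        ≤ ∏ _i ∈ Finset.Ico a m, (12 : ℝ) := by
          refine Finset.prod_le_prod (fun i _ => le_of_lt ?_) (fun i hi => ?_)
          · exact div_pos (hcardpos _) (hcardpos _)
          · exact hratio i (by have := Finset.mem_Ico.mp hi; omega)
      _ = (12 : ℝ) ^ (m - a) := by rw [Finset.prod_const, Nat.card_Ico]
  · -- R part
    rw [Finset.sum_comm]
    have hper : ∀ R : ∀ i : Fin (m + 1), A (m + 1 - 1 - (i : ℕ)),
        (∑ q : A (m + 1),
          if R ⟨m + 1 - b - 1, by omega⟩ =
              cast (congrArg A (by omega : b = m + 1 - 1 - (m + 1 - b - 1))) r then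
            g (m + 1) q (R ⟨0, by omega⟩) *
            ∏ i : Fin (m + 1 - 1),
              g (m + 1 - 1 - (i : ℕ)) (R ⟨(i : ℕ), by have := i.isLt; omega⟩)
                (R ⟨(i : ℕ) + 1, by have := i.isLt; omega⟩) else 0)
        = ((Fintype.card (A (m + 1)) : ℝ) / (Fintype.card (A (m + 1 - 1)) : ℝ)) *
          (if R ⟨m + 1 - b - 1, by omega⟩ =
              cast (congrArg A (by omega : b = m + 1 - 1 - (m + 1 - b - 1))) r then
            ∏ i : Fin (m + 1 - 1),
              g (m + 1 - 1 - (i : ℕ)) (R ⟨(i : ℕ), by have := i.isLt; omega⟩)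
                (R ⟨(i : ℕ) + 1, by have := i.isLt; omega⟩) else 0) := by
      intro R
      by_cases hR : R ⟨m + 1 - b - 1, by omega⟩ =
          cast (congrArg A (by omega : b = m + 1 - 1 - (m + 1 - b - 1))) r
      · simp only [if_pos hR]
        rw [← Finset.sum_mul, hcol (m + 1) (by omega) (by omega) (R ⟨0, by omega⟩)]
      · simp [hR]
    refine le_trans (le_of_eq (Finset.sum_congr rfl fun R _ => hper R)) ?_
    rw [← Finset.mul_sum]
    have hRrow : ∀ j, j < m → ∀ x : A (m - j), ∑ y : A (m - j - 1), g (m - j) x y = 1 :=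
      fun j hj x => hrow (m - j) (by omega) (by omega) x
    have hRcol : ∀ j, j < m → ∀ y : A (m - j - 1), ∑ x : A (m - j), g (m - j) x y =
        (Fintype.card (A (m - j)) : ℝ) / (Fintype.card (A (m - j - 1)) : ℝ) :=
      fun j hj y => hcol (m - j) (by omega) (by omega) y
    have hcore := chainRcore (m + 1 - b - 1) m (by omega) (fun j => A (m - j))
      (fun j x y => g (m - j) x y)
      (fun j => (Fintype.card (A (m - j)) : ℝ) / (Fintype.card (A (m - j - 1)) : ℝ))
      hRrow hRcol (cast (congrArg A (by omega : b = m + 1 - 1 - (m + 1 - b - 1))) r)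
      (by omega)
    have hprodR : ∏ i ∈ Finset.range (m + 1 - b - 1),
        (Fintype.card (A (m - i)) : ℝ) / (Fintype.card (A (m - i - 1)) : ℝ)
        ≤ (12 : ℝ) ^ (m + 1 - b - 1) := by
      calc ∏ i ∈ Finset.range (m + 1 - b - 1),
            (Fintype.card (A (m - i)) : ℝ) / (Fintype.card (A (m - i - 1)) : ℝ)
          ≤ ∏ _i ∈ Finset.range (m + 1 - b - 1), (12 : ℝ) := by
            refine Finset.prod_le_prod (fun i _ => le_of_lt ?_) (fun i hi => ?_)
            · exact div_pos (hcardpos _) (hcardpos _)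
            · have hi' : i < m + 1 - b - 1 := Finset.mem_range.mp hi
              have h : m - i - 1 + 1 = m - i := by omega
              have h2 := hratio (m - i - 1) (by omega)
              rw [h] at h2
              exact h2
        _ = (12 : ℝ) ^ (m + 1 - b - 1) := by rw [Finset.prod_const, Finset.card_range]
    have hSnn : (0 : ℝ) ≤ ∑ R : ∀ i : Fin (m + 1), A (m + 1 - 1 - (i : ℕ)),
        (if R ⟨m + 1 - b - 1, by omega⟩ =
            cast (congrArg A (by omega : b = m + 1 - 1 - (m + 1 - b - 1))) r then
          ∏ i : Fin (m + 1 - 1),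
            g (m + 1 - 1 - (i : ℕ)) (R ⟨(i : ℕ), by have := i.isLt; omega⟩)
              (R ⟨(i : ℕ) + 1, by have := i.isLt; omega⟩) else 0) := by
      refine Finset.sum_nonneg fun R _ => ?_
      by_cases hR : R ⟨m + 1 - b - 1, by omega⟩ =
          cast (congrArg A (by omega : b = m + 1 - 1 - (m + 1 - b - 1))) r
      · rw [if_pos hR]
        refine Finset.prod_nonneg fun i _ => ?_
        exact hnonneg (m + 1 - 1 - (i : ℕ)) (by have := i.isLt; omega)
          (by have := i.isLt; omega) _ _
      · rw [if_neg hR]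
    refine le_trans (mul_le_mul (hratio m (le_refl m))
      (le_trans (le_of_eq hcore) hprodR) hSnn (by norm_num)) (le_of_eq ?_)
    rw [← pow_succ']
    congr 1
    omega
  · -- nonneg of second factor
    refine Finset.sum_nonneg fun q _ => Finset.sum_nonneg fun R _ => ?_
    by_cases hR : R ⟨m + 1 - b - 1, by omega⟩ =
        cast (congrArg A (by omega : b = m + 1 - 1 - (m + 1 - b - 1))) r
    · rw [if_pos hR]
      refine mul_nonneg (hnonneg (m + 1) (by omega) (by omega) _ _) ?_
      refine Finset.prod_nonneg fun i _ => ?_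
      exact hnonneg (m + 1 - 1 - (i : ℕ)) (by have := i.isLt; omega)
        (by have := i.isLt; omega) _ _
    · rw [if_neg hR]
  · -- arithmetic
    rw [← pow_add]
    congr 1
    omega
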